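/- arXiv:2210.13948 — 5 statements merged into one kernel-verified Lean document; each statement's English description precedes it below -/
import Mathlib

section
/- Let (E, d) be a complete metric space and let (u_i)_{i∈ℕ} be a sequence of pairwise distinct points of E whose range is dense in E. Suppose a sequence (δ_i)_{i∈ℕ} of real numbers satisfies: (A1) δ_i ≥ 0 for all i; (A2) inf_{i} δ_i = 0; (A3) for all i, j, |δ_i − δ_j| ≤ d(u_i, u_j) ≤ δ_i + δ_j. Then there exists a unique point y ∈ E such that d(y, u_i) = δ_i for all i ∈ ℕ. -/
/-!
Choose indices `n k` with `δ (n k) → 0`. The upper bound `d(u_i, u_j) ≤ δ_i + δ_j` makes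
`u (n k)` a Cauchy sequence, and the two-sided bound `|d(u_j, u_i) - δ_i| ≤ δ_j` shows that its
limit `y` has `d(y, u_i) = δ_i`. Any two such points `y, z` satisfy `d(y, z) ≤ 2 δ_(n k) → 0`.
-/

open Filter Topology Set

theorem exists_seq_tendsto_ciInf {ι α : Type*} [Nonempty ι] [ConditionallyCompleteLinearOrder α]
    [TopologicalSpace α] [OrderTopology α] [FirstCountableTopology α] {f : ι → α}
    (hf : BddBelow (range f)) : ∃ n : ℕ → ι, Tendsto (f ∘ n) atTop (𝓝 (⨅ i, f i)) := by
  obtain ⟨v, -, hv, hv_mem⟩ := exists_seq_tendsto_sInf (range_nonempty f) hf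
  choose n hn using hv_mem
  refine ⟨n, ?_⟩
  rwa [show f ∘ n = v from funext hn]

theorem cauchySeq_of_dist_le_add {α β : Type*} [PseudoMetricSpace α] [Nonempty β]
    [SemilatticeSup β] {x : β → α} {r : β → ℝ} (hr : Tendsto r atTop (𝓝 0))
    (hx : ∀ m n, dist (x m) (x n) ≤ r m + r n) : CauchySeq x := by
  refine Metric.cauchySeq_iff'.2 fun ε hε => ?_
  obtain ⟨N, hN⟩ := eventually_atTop.1 (hr.eventually (gt_mem_nhds (half_pos hε)))
  exact ⟨N, fun n hn => (hx n N).trans_lt (by linarith [hN n hn, hN N le_rfl])⟩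

/-- Katětov's condition for `δ` to be the distances from one further point to the points `u i`. -/
def IsKatetov {ι E : Type*} [PseudoMetricSpace E] (u : ι → E) (δ : ι → ℝ) : Prop :=
  ∀ i j, |δ i - δ j| ≤ dist (u i) (u j) ∧ dist (u i) (u j) ≤ δ i + δ j

namespace IsKatetov

variable {ι E : Type*} {u : ι → E} {δ : ι → ℝ}

theorem abs_dist_sub_le [PseudoMetricSpace E] (h : IsKatetov u δ) (i j : ι) :
    |dist (u j) (u i) - δ i| ≤ δ j := by
  obtain ⟨hlow, hup⟩ := h j i
  rw [abs_le] at hlow ⊢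
  constructor <;> linarith

theorem exists_dist_eq [PseudoMetricSpace E] [CompleteSpace E] (h : IsKatetov u δ)
    {n : ℕ → ι} (hn : Tendsto (δ ∘ n) atTop (𝓝 0)) : ∃ y, ∀ i, dist y (u i) = δ i := by
  have hcauchy : CauchySeq (u ∘ n) := cauchySeq_of_dist_le_add hn fun k l => (h (n k) (n l)).2
  obtain ⟨y, hy⟩ := cauchySeq_tendsto_of_complete hcauchy
  refine ⟨y, fun i => tendsto_nhds_unique (hy.dist tendsto_const_nhds) ?_⟩
  refine tendsto_iff_dist_tendsto_zero.2 (squeeze_zero (fun _ => dist_nonneg) (fun k => ?_) hn)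
  exact (Real.dist_eq _ _).trans_le (h.abs_dist_sub_le i (n k))

end IsKatetov

theorem eq_of_forall_dist_eq_of_tendsto_zero {ι E : Type*} [MetricSpace E] {u : ι → E}
    {δ : ι → ℝ} {n : ℕ → ι} (hn : Tendsto (δ ∘ n) atTop (𝓝 0)) {y z : E}
    (hy : ∀ i, dist y (u i) = δ i) (hz : ∀ i, dist z (u i) = δ i) : y = z := by
  have hbound : ∀ k, dist y z ≤ δ (n k) + δ (n k) := fun k =>
    (dist_triangle_right y z (u (n k))).trans_eq (by rw [hy, hz])
  have hlim : dist y z ≤ 0 + 0 := ge_of_tendsto' (hn.add hn) hbound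
  exact dist_le_zero.1 (by simpa using hlim)

theorem exists_unique_point_of_dist_sequence_general
    {E : Type*} [MetricSpace E] [CompleteSpace E]
    (u : ℕ → E)
    (δ : ℕ → ℝ)
    (hA1 : ∀ i, 0 ≤ δ i)
    (hA2 : (⨅ i, δ i) = 0)
    (hA3 : ∀ i j, |δ i - δ j| ≤ dist (u i) (u j) ∧ dist (u i) (u j) ≤ δ i + δ j) :
    ∃! y : E, ∀ i, dist y (u i) = δ i := by
  obtain ⟨n, hn⟩ := exists_seq_tendsto_ciInf (f := δ) ⟨0, forall_mem_range.2 hA1⟩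
  rw [hA2] at hn
  obtain ⟨y, hy⟩ := IsKatetov.exists_dist_eq hA3 hn
  exact ⟨y, hy, fun z hz => eq_of_forall_dist_eq_of_tendsto_zero hn hz hy⟩

/-- In a complete metric space `E` with a dense sequence `u` of pairwise
distinct points, any real sequence `δ` satisfying (A1)-(A3) is the sequence of distances
from a unique point `y` of `E` to the points `u i`. -/
theorem exists_unique_point_of_dist_sequence
    {E : Type*} [MetricSpace E] [CompleteSpace E]
    (u : ℕ → E) (hu_inj : Function.Injective u) (hu_dense : DenseRange u)
    (δ : ℕ → ℝ)
    (hA1 : ∀ i, 0 ≤ δ i)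
    (hA2 : (⨅ i, δ i) = 0)
    (hA3 : ∀ i j, |δ i - δ j| ≤ dist (u i) (u j) ∧ dist (u i) (u j) ≤ δ i + δ j) :
    ∃! y : E, ∀ i, dist y (u i) = δ i :=
  exists_unique_point_of_dist_sequence_general u δ hA1 hA2 hA3
end

section
/- Let β ≥ 0 and let θ : ℕ → ℝ satisfy θ_i ≥ 0 for all i and Σ_i θ_i² < ∞, and assume that β > 0 or Σ_i θ_i = ∞ (i.e. θ is not summable). Then the function Ψ(t) = (β/2)t² + Σ_i (e^{−θ_i t} − 1 + θ_i t) is continuous on [0, ∞), strictly increasing on [0, ∞), and Ψ(t) → ∞ as t → ∞. -/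
open Real Set Filter

/-! Each summand `exp (-θᵢ t) - 1 + θᵢ t` is nonnegative, nondecreasing in `t ≥ 0` and at most
`θᵢ² t²`, so by the Weierstrass M-test the series converges locally uniformly on `[0, ∞)` to a
continuous nondecreasing function. Strict monotonicity and divergence at infinity come either from
the term `β t² / 2` when `β > 0`, or otherwise from a single summand with `θᵢ > 0`, which is
strictly increasing and bounded below by `θᵢ t - 1`. -/

-- The summands of `Ψ(t)` are `expRemainder (θ i * t)`.
noncomputable def expRemainder (x : ℝ) : ℝ := exp (-x) - 1 + x

lemma sub_one_le_expRemainder (x : ℝ) : x - 1 ≤ expRemainder x := by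
  unfold expRemainder; linarith [exp_pos (-x)]

lemma expRemainder_nonneg (x : ℝ) : 0 ≤ expRemainder x := by
  unfold expRemainder; linarith [add_one_le_exp (-x)]

lemma expRemainder_le_sq {x : ℝ} (hx : 0 ≤ x) : expRemainder x ≤ x ^ 2 := by
  have hexp : exp (-x) ≤ (1 + x)⁻¹ := by
    rw [exp_neg]
    exact inv_anti₀ (by positivity) (by linarith [add_one_le_exp x])
  -- `(1 + x)⁻¹ - 1 + x = x ^ 2 / (1 + x)`
  have hinv : (1 + x)⁻¹ - 1 + x ≤ x ^ 2 := by
    rw [inv_eq_one_div, div_sub_one (by positivity), div_add' _ _ _ (by positivity),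
      div_le_iff₀ (by positivity)]
    nlinarith
  unfold expRemainder; linarith

lemma expRemainder_strictMonoOn : StrictMonoOn expRemainder (Ici 0) := by
  intro a ha b _ hab
  have hsplit : exp (-b) = exp (-a) * exp (-(b - a)) := by rw [← exp_add]; ring_nf
  have hgap : 1 - exp (-(b - a)) < b - a := by
    linarith [add_one_lt_exp (x := -(b - a)) (by linarith)]
  have ha1 : exp (-a) ≤ 1 := exp_le_one_iff.mpr (by linarith [mem_Ici.mp ha])
  have hd1 : exp (-(b - a)) ≤ 1 := exp_le_one_iff.mpr (by linarith)
  unfold expRemainder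
  nlinarith [mul_nonneg (sub_nonneg.mpr ha1) (sub_nonneg.mpr hd1)]

lemma expRemainder_mul_le_sq_mul_sq {c t T : ℝ} (hc : 0 ≤ c) (ht : 0 ≤ t) (htT : t ≤ T) :
    expRemainder (c * t) ≤ c ^ 2 * T ^ 2 :=
  (expRemainder_le_sq (mul_nonneg hc ht)).trans (by rw [mul_pow]; gcongr)

lemma expRemainder_mul_monotoneOn {c : ℝ} (hc : 0 ≤ c) :
    MonotoneOn (fun t => expRemainder (c * t)) (Ici 0) :=
  expRemainder_strictMonoOn.monotoneOn.comp ((monotone_mul_left_of_nonneg hc).monotoneOn _)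
    fun _ ht => mul_nonneg hc ht

lemma expRemainder_mul_strictMonoOn {c : ℝ} (hc : 0 < c) :
    StrictMonoOn (fun t => expRemainder (c * t)) (Ici 0) :=
  expRemainder_strictMonoOn.comp ((strictMono_mul_left_of_pos hc).strictMonoOn _)
    fun _ ht => mul_nonneg hc.le ht

lemma continuousOn_Ici_of_forall_continuousOn_Icc {α β : Type*} [LinearOrder α]
    [TopologicalSpace α] [OrderTopology α] [NoMaxOrder α] [TopologicalSpace β] {f : α → β}
    {a : α} (hf : ∀ b, ContinuousOn f (Icc a b)) : ContinuousOn f (Ici a) := by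
  intro x hx
  obtain ⟨b, hxb⟩ := exists_gt x
  refine (hf b x ⟨hx, hxb.le⟩).mono_of_mem_nhdsWithin ?_
  rw [← Ici_inter_Iic]
  exact inter_mem_nhdsWithin _ (Iic_mem_nhds hxb)

section Series

variable {θ : ℕ → ℝ}

lemma summable_expRemainder_mul (hθ : ∀ i, 0 ≤ θ i) (hθ2 : Summable fun i => θ i ^ 2) {t : ℝ}
    (ht : 0 ≤ t) : Summable fun i => expRemainder (θ i * t) :=
  (hθ2.mul_right (t ^ 2)).of_nonneg_of_le (fun _ => expRemainder_nonneg _)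
    fun i => expRemainder_mul_le_sq_mul_sq (hθ i) ht le_rfl

lemma continuousOn_tsum_expRemainder_mul (hθ : ∀ i, 0 ≤ θ i)
    (hθ2 : Summable fun i => θ i ^ 2) :
    ContinuousOn (fun t => ∑' i, expRemainder (θ i * t)) (Ici 0) := by
  refine continuousOn_Ici_of_forall_continuousOn_Icc fun T => ?_
  refine continuousOn_tsum (fun i => ?_) (hθ2.mul_right (T ^ 2)) fun i t ht => ?_
  · unfold expRemainder; fun_prop
  · rw [Real.norm_of_nonneg (expRemainder_nonneg _)]
    exact expRemainder_mul_le_sq_mul_sq (hθ i) ht.1 ht.2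

lemma monotoneOn_tsum_expRemainder_mul (hθ : ∀ i, 0 ≤ θ i)
    (hθ2 : Summable fun i => θ i ^ 2) :
    MonotoneOn (fun t => ∑' i, expRemainder (θ i * t)) (Ici 0) := fun _ hs _ ht hst =>
  (summable_expRemainder_mul hθ hθ2 hs).tsum_le_tsum
    (fun i => expRemainder_mul_monotoneOn (hθ i) hs ht hst) (summable_expRemainder_mul hθ hθ2 ht)

lemma strictMonoOn_tsum_expRemainder_mul (hθ : ∀ i, 0 ≤ θ i)
    (hθ2 : Summable fun i => θ i ^ 2) {i : ℕ} (hi : 0 < θ i) :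
    StrictMonoOn (fun t => ∑' i, expRemainder (θ i * t)) (Ici 0) := fun _ hs _ ht hst =>
  (summable_expRemainder_mul hθ hθ2 hs).tsum_lt_tsum
    (fun j => expRemainder_mul_monotoneOn (hθ j) hs ht hst.le)
    (expRemainder_mul_strictMonoOn hi hs ht hst) (summable_expRemainder_mul hθ hθ2 ht)

lemma tendsto_tsum_expRemainder_mul_atTop (hθ : ∀ i, 0 ≤ θ i)
    (hθ2 : Summable fun i => θ i ^ 2) {i : ℕ} (hi : 0 < θ i) :
    Tendsto (fun t => ∑' i, expRemainder (θ i * t)) atTop atTop := by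
  have hlin : Tendsto (fun t => θ i * t - 1) atTop atTop :=
    tendsto_atTop_add_const_right _ _ (tendsto_id.const_mul_atTop hi)
  refine tendsto_atTop_mono' _ ?_ hlin
  filter_upwards [eventually_ge_atTop 0] with t ht
  calc θ i * t - 1 ≤ expRemainder (θ i * t) := sub_one_le_expRemainder _
    _ ≤ ∑' j, expRemainder (θ j * t) :=
      (summable_expRemainder_mul hθ hθ2 ht).le_tsum i fun j _ => expRemainder_nonneg _

end Series

lemma exists_pos_of_not_summable {θ : ℕ → ℝ} (hθ : ∀ i, 0 ≤ θ i) (h : ¬ Summable θ) :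
    ∃ i, 0 < θ i := by
  by_contra! hle
  obtain rfl : θ = 0 := funext fun i => le_antisymm (hle i) (hθ i)
  exact h summable_zero

/-- For `β ≥ 0`, nonnegative `θ` with `∑ θ i ^ 2 < ∞`, and `β > 0` or
`∑ θ i = ∞`, the function `Ψ(t) = (β/2) t² + ∑' i, (exp (−θ i t) − 1 + θ i t)` is
continuous on `[0, ∞)`, strictly increasing on `[0, ∞)`, and tends to `∞` at `∞`. -/
theorem psi_continuous_strictMono_tendsto
    (β : ℝ) (hβ : 0 ≤ β) (θ : ℕ → ℝ) (hθ : ∀ i, 0 ≤ θ i)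
    (hθ2 : Summable fun i => (θ i) ^ 2)
    (hass : 0 < β ∨ ¬ Summable θ) :
    ContinuousOn
        (fun t : ℝ => β / 2 * t ^ 2 + ∑' i, (Real.exp (-(θ i * t)) - 1 + θ i * t))
        (Set.Ici 0) ∧
    StrictMonoOn
        (fun t : ℝ => β / 2 * t ^ 2 + ∑' i, (Real.exp (-(θ i * t)) - 1 + θ i * t))
        (Set.Ici 0) ∧
    Filter.Tendsto
        (fun t : ℝ => β / 2 * t ^ 2 + ∑' i, (Real.exp (-(θ i * t)) - 1 + θ i * t))
        Filter.atTop Filter.atTop := by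
  have hquad_mono : MonotoneOn (fun t : ℝ => β / 2 * t ^ 2) (Ici 0) := fun _ hs _ _ hst =>
    mul_le_mul_of_nonneg_left (pow_le_pow_left₀ hs hst 2) (by linarith)
  have hseries_nonneg (t : ℝ) : 0 ≤ ∑' i, expRemainder (θ i * t) :=
    tsum_nonneg fun _ => expRemainder_nonneg _
  refine ⟨(by fun_prop : Continuous fun t : ℝ => β / 2 * t ^ 2).continuousOn.add
    (continuousOn_tsum_expRemainder_mul hθ hθ2), ?_⟩
  rcases hass with hβpos | hθns
  · have hquad_strict : StrictMonoOn (fun t : ℝ => β / 2 * t ^ 2) (Ici 0) := fun _ hs _ ht hst =>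
      mul_lt_mul_of_pos_left (pow_left_strictMonoOn₀ two_ne_zero hs ht hst) (half_pos hβpos)
    exact ⟨hquad_strict.add_monotone (monotoneOn_tsum_expRemainder_mul hθ hθ2),
      ((tendsto_pow_atTop two_ne_zero).const_mul_atTop (half_pos hβpos)).atTop_add_nonneg
        hseries_nonneg⟩
  · obtain ⟨i, hi⟩ := exists_pos_of_not_summable hθ hθns
    exact ⟨hquad_mono.add_strictMono (strictMonoOn_tsum_expRemainder_mul hθ hθ2 hi),
      (tendsto_tsum_expRemainder_mul_atTop hθ hθ2 hi).nonneg_add_atTop fun t => by positivity⟩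
end

section
/- Let β ≥ 0 and let θ : ℕ → ℝ satisfy θ_i ≥ 0 for all i and Σ_i θ_i² < ∞, and assume that β > 0 or Σ_i θ_i = ∞. Then Ψ(t)/t → ∞ as t → ∞, where Ψ(t) = (β/2)t² + Σ_i (e^{−θ_i t} − 1 + θ_i t). -/
/-!
Every term `exp (-x) - 1 + x` is nonnegative, at least `x - 1`, and at most `x ^ 2 / 2` for
`x ≥ 0`, so the series defining `Ψ` converges. If `β > 0`, then `Ψ t / t ≥ β t / 2`. Otherwise,
keeping the first `n` terms gives `Ψ t / t ≥ ∑_{i<n} θ i - n / t`, and the partial sums of `θ`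
are unbounded.
-/

open Real Filter

noncomputable def psi (β : ℝ) (θ : ℕ → ℝ) (t : ℝ) : ℝ :=
  β / 2 * t ^ 2 + ∑' i, (exp (-(θ i * t)) - 1 + θ i * t)

lemma exp_neg_sub_one_add_nonneg (x : ℝ) : 0 ≤ exp (-x) - 1 + x := by
  linarith [one_sub_le_exp_neg x]

-- From `exp x ≥ 1 + x + x ^ 2 / 2` and `(1 + x + x ^ 2 / 2) (1 - x + x ^ 2 / 2) = 1 + x ^ 4 / 4`.
lemma exp_neg_le_one_sub_add_sq_div_two {x : ℝ} (hx : 0 ≤ x) :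
    exp (-x) ≤ 1 - x + x ^ 2 / 2 := by
  have hq : 0 < 1 + x + x ^ 2 / 2 := by positivity
  calc exp (-x) = (exp x)⁻¹ := exp_neg x
    _ ≤ (1 + x + x ^ 2 / 2)⁻¹ := inv_anti₀ hq (quadratic_le_exp_of_nonneg hx)
    _ ≤ 1 - x + x ^ 2 / 2 := by
      rw [inv_le_iff_one_le_mul₀' hq]
      nlinarith [sq_nonneg (x ^ 2)]

lemma summable_exp_neg_mul_sub_one_add {θ : ℕ → ℝ} (hθ : ∀ i, 0 ≤ θ i)
    (hθ2 : Summable fun i => θ i ^ 2) {t : ℝ} (ht : 0 ≤ t) :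
    Summable fun i => exp (-(θ i * t)) - 1 + θ i * t := by
  refine (hθ2.mul_right (t ^ 2 / 2)).of_nonneg_of_le
    (fun i => exp_neg_sub_one_add_nonneg _) fun i => ?_
  have := exp_neg_le_one_sub_add_sq_div_two (mul_nonneg (hθ i) ht)
  linarith [show (θ i * t) ^ 2 / 2 = θ i ^ 2 * (t ^ 2 / 2) by ring]

lemma mul_sq_le_psi (β : ℝ) (θ : ℕ → ℝ) (t : ℝ) : β / 2 * t ^ 2 ≤ psi β θ t :=
  le_add_of_nonneg_right (tsum_nonneg fun _ => exp_neg_sub_one_add_nonneg _)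

lemma mul_sum_range_sub_le_psi {β : ℝ} (hβ : 0 ≤ β) {θ : ℕ → ℝ} (hθ : ∀ i, 0 ≤ θ i)
    (hθ2 : Summable fun i => θ i ^ 2) {t : ℝ} (ht : 0 ≤ t) (n : ℕ) :
    t * ∑ i ∈ Finset.range n, θ i - n ≤ psi β θ t := by
  calc t * ∑ i ∈ Finset.range n, θ i - n = ∑ i ∈ Finset.range n, (θ i * t - 1) := by
        simp [Finset.sum_sub_distrib, Finset.mul_sum, mul_comm]
    _ ≤ ∑ i ∈ Finset.range n, (exp (-(θ i * t)) - 1 + θ i * t) :=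
        Finset.sum_le_sum fun i _ => by linarith [exp_pos (-(θ i * t))]
    _ ≤ ∑' i, (exp (-(θ i * t)) - 1 + θ i * t) :=
        (summable_exp_neg_mul_sub_one_add hθ hθ2 ht).sum_le_tsum _
          fun _ _ => exp_neg_sub_one_add_nonneg _
    _ ≤ psi β θ t := le_add_of_nonneg_left (by positivity)

lemma tendsto_psi_div_atTop_of_pos {β : ℝ} (hβ : 0 < β) (θ : ℕ → ℝ) :
    Tendsto (fun t => psi β θ t / t) atTop atTop := by
  refine tendsto_atTop_mono' _ ?_ (tendsto_id.const_mul_atTop (half_pos hβ))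
  filter_upwards [eventually_gt_atTop 0] with t ht
  rw [le_div_iff₀ ht]
  linarith [mul_sq_le_psi β θ t, show β / 2 * id t * t = β / 2 * t ^ 2 by simp; ring]

lemma tendsto_psi_div_atTop_of_not_summable {β : ℝ} (hβ : 0 ≤ β) {θ : ℕ → ℝ}
    (hθ : ∀ i, 0 ≤ θ i) (hθ2 : Summable fun i => θ i ^ 2) (hθ1 : ¬ Summable θ) :
    Tendsto (fun t => psi β θ t / t) atTop atTop := by
  refine tendsto_atTop.2 fun M => ?_
  obtain ⟨n, hn⟩ := (tendsto_atTop.1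
    ((not_summable_iff_tendsto_nat_atTop_of_nonneg hθ).1 hθ1) (M + 1)).exists
  filter_upwards [eventually_ge_atTop (max 1 (n : ℝ))] with t ht
  have ht1 : 1 ≤ t := le_of_max_le_left ht
  have htn : (n : ℝ) ≤ t := le_of_max_le_right ht
  rw [le_div_iff₀ (by linarith)]
  nlinarith [mul_sum_range_sub_le_psi hβ hθ hθ2 (by linarith : 0 ≤ t) n,
    mul_le_mul_of_nonneg_left hn (by linarith : 0 ≤ t)]

/-- For `β ≥ 0`, nonnegative `θ` with `∑ θ i ^ 2 < ∞`, and `β > 0` or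
`∑ θ i = ∞`, we have `Ψ(t)/t → ∞` as `t → ∞`, where
`Ψ(t) = (β/2) t² + ∑' i, (exp (−θ i t) − 1 + θ i t)`. -/
theorem psi_div_t_tendsto_atTop
    (β : ℝ) (hβ : 0 ≤ β) (θ : ℕ → ℝ) (hθ : ∀ i, 0 ≤ θ i)
    (hθ2 : Summable fun i => (θ i) ^ 2)
    (hass : 0 < β ∨ ¬ Summable θ) :
    Filter.Tendsto
      (fun t : ℝ =>
        (β / 2 * t ^ 2 + ∑' i, (Real.exp (-(θ i * t)) - 1 + θ i * t)) / t)
      Filter.atTop Filter.atTop := by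
  change Tendsto (fun t => psi β θ t / t) atTop atTop
  rcases hass with hβ_pos | hθ1
  · exact tendsto_psi_div_atTop_of_pos hβ_pos θ
  · exact tendsto_psi_div_atTop_of_not_summable hβ hθ hθ2 hθ1
end

section
/- Let β ≥ 0 and let θ : ℕ → ℝ satisfy θ_i ≥ 0 for all i and Σ_i θ_i² < ∞, and let g(t) = (β/2)t² + Σ_i (θ_i t − log(1 + θ_i t)) for t ≥ 0. Then g is differentiable on (0, ∞) with g'(t) = β t + Σ_i θ_i² t / (1 + θ_i t), and g' is in turn differentiable on (0, ∞) with g''(t) = β + Σ_i θ_i² / (1 + θ_i t)², both series being summable for every t > 0. -/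
/-! Each term `θᵢ t - log (1 + θᵢ t)` lies between `0` and `θᵢ² t²`, and its first two
derivatives `θᵢ² t / (1 + θᵢ t)` and `θᵢ² / (1 + θᵢ t)²` are bounded by `θᵢ² T` and `θᵢ²`
on `(0, T)`. Summability of `θᵢ²` therefore gives locally uniform domination, so both
series may be differentiated term by term. -/

open Real Set

namespace Real

lemma sub_log_one_add_nonneg {x : ℝ} (hx : -1 < x) : 0 ≤ x - log (1 + x) := by
  linarith [log_le_sub_one_of_pos (show 0 < 1 + x by linarith)]

lemma sub_log_one_add_le_sq {x : ℝ} (hx : 0 ≤ x) : x - log (1 + x) ≤ x ^ 2 := by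
  have hpos : 0 < 1 + x := by linarith
  have hlog : 1 - (1 + x)⁻¹ ≤ log (1 + x) := one_sub_inv_le_log_of_pos hpos
  calc x - log (1 + x) ≤ x - (1 - (1 + x)⁻¹) := by linarith
    _ = x ^ 2 / (1 + x) := by field_simp; ring
    _ ≤ x ^ 2 := div_le_self (sq_nonneg x) (by linarith)

end Real

lemma hasDerivAt_mul_sub_log_one_add_mul {a t : ℝ} (h : 1 + a * t ≠ 0) :
    HasDerivAt (fun s => a * s - log (1 + a * s)) (a ^ 2 * t / (1 + a * t)) t := by
  have hlin : HasDerivAt (fun s => 1 + a * s) a t := by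
    simpa using ((hasDerivAt_id t).const_mul a).const_add 1
  refine (((hasDerivAt_id t).const_mul a).sub (hlin.log h)).congr_deriv ?_
  field_simp
  ring

lemma hasDerivAt_sq_mul_div_one_add_mul {a t : ℝ} (h : 1 + a * t ≠ 0) :
    HasDerivAt (fun s => a ^ 2 * s / (1 + a * s)) (a ^ 2 / (1 + a * t) ^ 2) t := by
  have hnum : HasDerivAt (fun s => a ^ 2 * s) (a ^ 2) t := by
    simpa using (hasDerivAt_id t).const_mul (a ^ 2)
  have hden : HasDerivAt (fun s => 1 + a * s) a t := by
    simpa using ((hasDerivAt_id t).const_mul a).const_add 1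
  refine (hnum.div hden h).congr_deriv ?_
  ring

lemma sq_mul_div_one_add_mul_le {a s : ℝ} (ha : 0 ≤ a) (hs : 0 ≤ s) :
    a ^ 2 * s / (1 + a * s) ≤ a ^ 2 * s :=
  div_le_self (by positivity) (le_add_of_nonneg_right (by positivity))

lemma sq_div_one_add_mul_sq_le {a s : ℝ} (ha : 0 ≤ a) (hs : 0 ≤ s) :
    a ^ 2 / (1 + a * s) ^ 2 ≤ a ^ 2 :=
  div_le_self (sq_nonneg a) (one_le_pow₀ (le_add_of_nonneg_right (by positivity)))

section Series

variable {θ : ℕ → ℝ} (hθ : ∀ i, 0 ≤ θ i) (hθ2 : Summable fun i => θ i ^ 2)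
include hθ hθ2

lemma summable_mul_sub_log_one_add_mul {t : ℝ} (ht : 0 ≤ t) :
    Summable fun i => θ i * t - log (1 + θ i * t) := by
  refine (hθ2.mul_right (t ^ 2)).of_nonneg_of_le
    (fun i => sub_log_one_add_nonneg (by nlinarith [hθ i])) fun i => ?_
  rw [← mul_pow]
  exact sub_log_one_add_le_sq (mul_nonneg (hθ i) ht)

lemma summable_sq_mul_div_one_add_mul {t : ℝ} (ht : 0 ≤ t) :
    Summable fun i => θ i ^ 2 * t / (1 + θ i * t) :=
  (hθ2.mul_right t).of_nonneg_of_le (fun i => by have := hθ i; positivity)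
    fun i => sq_mul_div_one_add_mul_le (hθ i) ht

lemma summable_sq_div_one_add_mul_sq {t : ℝ} (ht : 0 ≤ t) :
    Summable fun i => θ i ^ 2 / (1 + θ i * t) ^ 2 :=
  hθ2.of_nonneg_of_le (fun i => by positivity) fun i => sq_div_one_add_mul_sq_le (hθ i) ht

lemma hasDerivAt_tsum_mul_sub_log_one_add_mul {t : ℝ} (ht : 0 < t) :
    HasDerivAt (fun s => ∑' i, (θ i * s - log (1 + θ i * s)))
      (∑' i, θ i ^ 2 * t / (1 + θ i * t)) t := by
  have hmem : t ∈ Ioo 0 (2 * t) := ⟨ht, by linarith⟩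
  refine hasDerivAt_tsum_of_isPreconnected (hθ2.mul_right (2 * t)) isOpen_Ioo
    (g := fun i s => θ i * s - log (1 + θ i * s))
    (g' := fun i s => θ i ^ 2 * s / (1 + θ i * s)) isPreconnected_Ioo
    (fun i s hs => ?_) (fun i s hs => ?_) hmem
    (summable_mul_sub_log_one_add_mul hθ hθ2 ht.le) hmem
  · exact hasDerivAt_mul_sub_log_one_add_mul (by nlinarith [hθ i, hs.1])
  · have hnonneg : 0 ≤ θ i ^ 2 * s / (1 + θ i * s) := by
      have := hθ i; have := hs.1; positivity
    rw [Real.norm_of_nonneg hnonneg]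
    exact (sq_mul_div_one_add_mul_le (hθ i) hs.1.le).trans
      (mul_le_mul_of_nonneg_left hs.2.le (sq_nonneg _))

lemma hasDerivAt_tsum_sq_mul_div_one_add_mul {t : ℝ} (ht : 0 < t) :
    HasDerivAt (fun s => ∑' i, θ i ^ 2 * s / (1 + θ i * s))
      (∑' i, θ i ^ 2 / (1 + θ i * t) ^ 2) t := by
  have hmem : t ∈ Ioo 0 (2 * t) := ⟨ht, by linarith⟩
  refine hasDerivAt_tsum_of_isPreconnected hθ2 isOpen_Ioo
    (g := fun i s => θ i ^ 2 * s / (1 + θ i * s))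
    (g' := fun i s => θ i ^ 2 / (1 + θ i * s) ^ 2) isPreconnected_Ioo
    (fun i s hs => ?_) (fun i s hs => ?_) hmem
    (summable_sq_mul_div_one_add_mul hθ hθ2 ht.le) hmem
  · exact hasDerivAt_sq_mul_div_one_add_mul (by nlinarith [hθ i, hs.1])
  · rw [Real.norm_of_nonneg (by positivity)]
    exact sq_div_one_add_mul_sq_le (hθ i) hs.1.le

end Series

theorem g_hasDerivAt_and_second_deriv_general
    (β : ℝ) (θ : ℕ → ℝ) (hθ : ∀ i, 0 ≤ θ i)
    (hθ2 : Summable fun i => (θ i) ^ 2) :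
    ∀ t : ℝ, 0 < t →
      (Summable fun i => (θ i) ^ 2 * t / (1 + θ i * t)) ∧
      (Summable fun i => (θ i) ^ 2 / (1 + θ i * t) ^ 2) ∧
      HasDerivAt
        (fun s : ℝ => β / 2 * s ^ 2 + ∑' i, (θ i * s - Real.log (1 + θ i * s)))
        (β * t + ∑' i, (θ i) ^ 2 * t / (1 + θ i * t)) t ∧
      HasDerivAt
        (fun s : ℝ => β * s + ∑' i, (θ i) ^ 2 * s / (1 + θ i * s))
        (β + ∑' i, (θ i) ^ 2 / (1 + θ i * t) ^ 2) t := by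
  intro t ht
  have hquad : HasDerivAt (fun s : ℝ => β / 2 * s ^ 2) (β * t) t := by
    refine ((hasDerivAt_pow 2 t).const_mul (β / 2)).congr_deriv ?_
    push_cast
    ring
  have hlin : HasDerivAt (fun s : ℝ => β * s) β t := by
    simpa using (hasDerivAt_id t).const_mul β
  exact ⟨summable_sq_mul_div_one_add_mul hθ hθ2 ht.le,
    summable_sq_div_one_add_mul_sq hθ hθ2 ht.le,
    hquad.add (hasDerivAt_tsum_mul_sub_log_one_add_mul hθ hθ2 ht),
    hlin.add (hasDerivAt_tsum_sq_mul_div_one_add_mul hθ hθ2 ht)⟩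

/-- For `β ≥ 0` and nonnegative `θ` with `∑ θ i ^ 2 < ∞`, the function
`g(t) = (β/2) t² + ∑' i, (θ i t − log (1 + θ i t))` is differentiable on `(0, ∞)` with
`g'(t) = β t + ∑' i, θ i ² t / (1 + θ i t)`, and `g'` is differentiable on `(0, ∞)` with
`g''(t) = β + ∑' i, θ i ² / (1 + θ i t)²`, both series being summable for every `t > 0`. -/
theorem g_hasDerivAt_and_second_deriv
    (β : ℝ) (hβ : 0 ≤ β) (θ : ℕ → ℝ) (hθ : ∀ i, 0 ≤ θ i)
    (hθ2 : Summable fun i => (θ i) ^ 2) :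
    ∀ t : ℝ, 0 < t →
      (Summable fun i => (θ i) ^ 2 * t / (1 + θ i * t)) ∧
      (Summable fun i => (θ i) ^ 2 / (1 + θ i * t) ^ 2) ∧
      HasDerivAt
        (fun s : ℝ => β / 2 * s ^ 2 + ∑' i, (θ i * s - Real.log (1 + θ i * s)))
        (β * t + ∑' i, (θ i) ^ 2 * t / (1 + θ i * t)) t ∧
      HasDerivAt
        (fun s : ℝ => β * s + ∑' i, (θ i) ^ 2 * s / (1 + θ i * s))
        (β + ∑' i, (θ i) ^ 2 / (1 + θ i * t) ^ 2) t :=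
  g_hasDerivAt_and_second_deriv_general β θ hθ hθ2
end

section
/- Let θ : ℕ → ℝ satisfy θ_i ≥ 0 for all i and Σ_i θ_i² < ∞, and let t ≥ 0. Then the family (θ_i t − log(1 + θ_i t))_{i∈ℕ} is summable, the family ((1 + θ_i t) e^{−θ_i t})_{i∈ℕ} is multipliable, and ∏_i (1 + θ_i t) e^{−θ_i t} = exp(− Σ_i (θ_i t − log(1 + θ_i t))). -/
/-- For nonnegative `θ` with `∑ θ i ^ 2 < ∞` and `t ≥ 0`, the family
`(θ i t − log (1 + θ i t))_i` is summable, the family `((1 + θ i t) e^{−θ i t})_i` is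
multipliable, and `∏' i, (1 + θ i t) e^{−θ i t} = exp (−∑' i, (θ i t − log (1 + θ i t)))`. -/
theorem tprod_tail_second_arrival
    (θ : ℕ → ℝ) (hθ : ∀ i, 0 ≤ θ i) (hθ2 : Summable fun i => (θ i) ^ 2)
    (t : ℝ) (ht : 0 ≤ t) :
    (Summable fun i => θ i * t - Real.log (1 + θ i * t)) ∧
    (Multipliable fun i => (1 + θ i * t) * Real.exp (-(θ i * t))) ∧
    ∏' i, (1 + θ i * t) * Real.exp (-(θ i * t))
      = Real.exp (-∑' i, (θ i * t - Real.log (1 + θ i * t))) := by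
  have hx : ∀ i, 0 ≤ θ i * t := fun i => mul_nonneg (hθ i) ht
  have hpos : ∀ i, 0 < 1 + θ i * t := fun i => by linarith [hx i]
  have hnonneg : ∀ i, 0 ≤ θ i * t - Real.log (1 + θ i * t) := by
    intro i
    have := Real.log_le_sub_one_of_pos (hpos i)
    linarith
  have hle : ∀ i, θ i * t - Real.log (1 + θ i * t) ≤ (θ i * t) ^ 2 := by
    intro i
    have h1 : Real.log (1 / (1 + θ i * t)) ≤ 1 / (1 + θ i * t) - 1 :=
      Real.log_le_sub_one_of_pos (by have := hpos i; positivity)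
    rw [Real.log_div one_ne_zero (ne_of_gt (hpos i)), Real.log_one] at h1
    have h2 : 1 - 1 / (1 + θ i * t) ≤ Real.log (1 + θ i * t) := by linarith
    have h3 : (θ i * t) - (θ i * t) ^ 2 ≤ 1 - 1 / (1 + θ i * t) := by
      have h4 : 1 / (1 + θ i * t) ≤ 1 - θ i * t + (θ i * t) ^ 2 := by
        rw [div_le_iff₀ (hpos i)]
        nlinarith [hx i, sq_nonneg (θ i * t)]
      linarith
    linarith
  have hsum : Summable fun i => θ i * t - Real.log (1 + θ i * t) := by
    apply Summable.of_nonneg_of_le hnonneg hle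
    have : (fun i => (θ i * t) ^ 2) = fun i => t ^ 2 * (θ i) ^ 2 := by
      funext i; ring
    rw [this]
    exact hθ2.mul_left _
  refine ⟨hsum, ?_, ?_⟩
  · have h := (hsum.neg.hasSum).rexp
    have heq : (Real.exp ∘ fun i => -(θ i * t - Real.log (1 + θ i * t)))
        = fun i => (1 + θ i * t) * Real.exp (-(θ i * t)) := by
      funext i
      simp only [Function.comp_apply, neg_sub]
      rw [Real.exp_sub, Real.exp_log (hpos i)]
      rw [Real.exp_neg]
      field_simp
    rw [heq] at h
    exact h.multipliable
  · have h := (hsum.neg.hasSum).rexp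
    have heq : (Real.exp ∘ fun i => -(θ i * t - Real.log (1 + θ i * t)))
        = fun i => (1 + θ i * t) * Real.exp (-(θ i * t)) := by
      funext i
      simp only [Function.comp_apply, neg_sub]
      rw [Real.exp_sub, Real.exp_log (hpos i)]
      rw [Real.exp_neg]
      field_simp
    rw [heq] at h
    rw [h.tprod_eq, tsum_neg]
end
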